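/- arXiv:1204.3947 — 4 statements merged into one kernel-verified Lean document; each statement's English description precedes it below -/
import Mathlib

section
/- Let C be the Lorentz cone in ℝ^{n+1}, i.e., C = {x : x₀ ≥ 0 and x₀² ≥ x₁² + ⋯ + x_n²}, and let a be a point in the interior of C. Then ∂C ∩ ∂(a − C) is contained in the affine hyperplane {x : ā · x = (ā · a)/2}, where ā = (−a₀, a₁, …, a_n). -/
/-!
Both `x` and `a - x` lie on the boundary of the cone, so `x₀² = ∑ xᵢ²` and
`(a₀ - x₀)² = ∑ (aᵢ - xᵢ)²`. Subtracting the two identities cancels the quadratic terms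
in `x` and leaves exactly `2 ⟪ā, x⟫ = ⟪ā, a⟫`.
-/

open Set

theorem frontier_setOf_nonneg_and_le_sq_subset {X : Type*} [TopologicalSpace X]
    {f g : X → ℝ} (hf : Continuous f) (hg : Continuous g) (hg_nonneg : ∀ x, 0 ≤ g x) :
    frontier {x | 0 ≤ f x ∧ g x ≤ f x ^ 2} ⊆ {x | g x = f x ^ 2} := by
  intro x hx
  rcases frontier_inter_subset {x | 0 ≤ f x} {x | g x ≤ f x ^ 2} hx with
    ⟨hx_zero, hx_le⟩ | ⟨-, hx_eq⟩
  · have hf_zero : f x = 0 := (frontier_le_subset_eq continuous_const hf hx_zero).symm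
    have hle : g x ≤ f x ^ 2 :=
      (isClosed_le (f := g) (g := fun x => f x ^ 2) hg (hf.pow 2)).closure_subset hx_le
    change g x = f x ^ 2
    rw [hf_zero] at hle ⊢
    exact le_antisymm hle (by simpa using hg_nonneg x)
  · exact frontier_le_subset_eq hg (hf.pow 2) hx_eq

theorem EuclideanSpace.inner_eq_mul_add_sum_succ {n : ℕ}
    (u v : EuclideanSpace ℝ (Fin (n + 1))) :
    inner ℝ u v = u 0 * v 0 + ∑ i : Fin n, u i.succ * v i.succ := by
  simp [PiLp.inner_apply, Fin.sum_univ_succ, mul_comm]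

theorem stmt1_general (n : ℕ) (C : Set (EuclideanSpace ℝ (Fin (n + 1))))
    (hC : C = {x | 0 ≤ x 0 ∧ ∑ i : Fin n, (x i.succ) ^ 2 ≤ (x 0) ^ 2})
    (a : EuclideanSpace ℝ (Fin (n + 1)))
    (abar : EuclideanSpace ℝ (Fin (n + 1)))
    (habar0 : abar 0 = -(a 0)) (habari : ∀ i : Fin n, abar i.succ = a i.succ) :
    ∀ x ∈ frontier C ∩ frontier ((fun c => a - c) '' C),
      (inner ℝ abar x : ℝ) = (inner ℝ abar a : ℝ) / 2 := by
  have hC_frontier : ∀ y ∈ frontier C, ∑ i : Fin n, (y i.succ) ^ 2 = (y 0) ^ 2 := by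
    subst hC
    exact frontier_setOf_nonneg_and_le_sq_subset (by fun_prop) (by fun_prop)
      fun y => Finset.sum_nonneg fun i _ => sq_nonneg _
  have hreflect : (fun c => a - c) '' C = (Homeomorph.subLeft a) ⁻¹' C := by
    ext y
    exact ⟨fun ⟨c, hc, hy⟩ => by simpa [← hy] using hc,
      fun hy => ⟨a - y, hy, sub_sub_cancel a y⟩⟩
  rintro x ⟨hx, hax⟩
  rw [hreflect, ← Homeomorph.preimage_frontier] at hax
  have hx_eq := hC_frontier x hx
  have hax_eq := hC_frontier _ hax
  simp only [Homeomorph.subLeft_apply, PiLp.sub_apply, sub_sq, Finset.sum_add_distrib,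
    Finset.sum_sub_distrib, mul_assoc, ← Finset.mul_sum] at hax_eq
  rw [EuclideanSpace.inner_eq_mul_add_sum_succ, EuclideanSpace.inner_eq_mul_add_sum_succ]
  simp only [habar0, habari, ← sq]
  linear_combination (1/2 : ℝ) * hx_eq - (1/2 : ℝ) * hax_eq

/-- For the Lorentz cone `C` in `ℝ^{n+1}` and `a` interior to `C`,
`∂C ∩ ∂(a - C)` lies in the hyperplane `{x | ⟪ā, x⟫ = ⟪ā, a⟫ / 2}` where
`ā = (-a₀, a₁, …, a_n)`. -/
theorem stmt1 (n : ℕ) (C : Set (EuclideanSpace ℝ (Fin (n + 1))))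
    (hC : C = {x | 0 ≤ x 0 ∧ ∑ i : Fin n, (x i.succ) ^ 2 ≤ (x 0) ^ 2})
    (a : EuclideanSpace ℝ (Fin (n + 1))) (ha : a ∈ interior C)
    (abar : EuclideanSpace ℝ (Fin (n + 1)))
    (habar0 : abar 0 = -(a 0)) (habari : ∀ i : Fin n, abar i.succ = a i.succ) :
    ∀ x ∈ frontier C ∩ frontier ((fun c => a - c) '' C),
      (inner ℝ abar x : ℝ) = (inner ℝ abar a : ℝ) / 2 :=
  stmt1_general n C hC a abar habar0 habari
end

section
/- Every 2-dimensional compact convex body K in the plane contains an inscribed parallelogram whose four vertices all lie on the boundary of K. -/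
/-!
Fix a short horizontal vector `u` and, among the points `p` with `p, p + u ∈ K` (a compact
set), take a lowest one `x`. Both `x` and `x + u` lie on the boundary of `K`: if one of them
were interior, the pair could be pushed a little towards a point of `K` lying strictly lower,
and if there is none, `x` and `x + u` are lowest points of `K` itself. The same holds for a
highest such point `y`. Since `K` has interior, `y` is strictly higher than `x`, so the
translated chords `[x, x + u]` and `[y, y + u]` span a nondegenerate parallelogram.
-/

open Set Filter Topology Module

section Chords

variable {E : Type*} [NormedAddCommGroup E] [NormedSpace ℝ E] {K : Set E} {φ : StrongDual ℝ E}
  {u x : E}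

theorem ContinuousLinearMap.notMem_interior_of_isMinOn (hφ : φ ≠ 0) (hmin : IsMinOn φ K x) :
    x ∉ interior K := fun hx =>
  hφ ((hmin.isLocalMin (mem_interior_iff_mem_nhds.1 hx)).hasFDerivAt_eq_zero φ.hasFDerivAt)

theorem Convex.exists_lt_of_mem_interior_of_add_mem (hK : Convex ℝ K) (hu : φ u = 0)
    (hx : x ∈ interior K) (hxu : x + u ∈ K) {z : E} (hz : z ∈ K) (hzx : φ z < φ x) :
    ∃ y ∈ K, y + u ∈ K ∧ φ y < φ x := by
  set w := z - (x + u)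
  have hlim : Tendsto (fun t : ℝ => x + t • w) (𝓝[>] 0) (𝓝 x) := by
    have : Continuous fun t : ℝ => x + t • w := by fun_prop
    simpa using (this.tendsto 0).mono_left nhdsWithin_le_nhds
  obtain ⟨t, hxK, ht0, ht1⟩ := ((hlim.eventually (mem_interior_iff_mem_nhds.1 hx)).and
    (Ioo_mem_nhdsGT (zero_lt_one' ℝ))).exists
  refine ⟨x + t • w, hxK, ?_, ?_⟩
  · have hcomb : x + t • w + u = (1 - t) • (x + u) + t • z := by
      simp only [w]; module
    rw [hcomb]
    exact hK hxu hz (by linarith) ht0.le (by ring)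
  · have hφw : φ w = φ z - φ x := by simp [w, hu]
    simp only [map_add, map_smul, hφw, smul_eq_mul]
    nlinarith

theorem Convex.notMem_interior_of_isMinOn_inter_preimage_add (hK : Convex ℝ K) (hφ : φ ≠ 0)
    (hu : φ u = 0) (hxu : x + u ∈ K) (hmin : IsMinOn φ (K ∩ (· + u) ⁻¹' K) x) :
    x ∉ interior K := by
  intro hx
  by_cases hlower : ∃ z ∈ K, φ z < φ x
  · obtain ⟨z, hz, hzx⟩ := hlower
    obtain ⟨y, hy, hyu, hyx⟩ := hK.exists_lt_of_mem_interior_of_add_mem hu hx hxu hz hzx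
    exact (isMinOn_iff.1 hmin y ⟨hy, hyu⟩).not_gt hyx
  · push Not at hlower
    exact φ.notMem_interior_of_isMinOn hφ (isMinOn_iff.2 hlower) hx

theorem Convex.mem_frontier_of_isMinOn_inter_preimage_add (hKc : IsClosed K) (hK : Convex ℝ K)
    (hφ : φ ≠ 0) (hu : φ u = 0) (hx : x ∈ K ∩ (· + u) ⁻¹' K)
    (hmin : IsMinOn φ (K ∩ (· + u) ⁻¹' K) x) :
    x ∈ frontier K ∧ x + u ∈ frontier K := by
  have hmin' : IsMinOn φ (K ∩ (· + -u) ⁻¹' K) (x + u) := by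
    refine isMinOn_iff.2 fun y ⟨hy, hyu⟩ => ?_
    have := isMinOn_iff.1 hmin (y + -u) ⟨hyu, by simpa using hy⟩
    simpa [hu] using this
  rw [hKc.frontier_eq]
  exact ⟨⟨hx.1, hK.notMem_interior_of_isMinOn_inter_preimage_add hφ hu hx.2 hmin⟩,
    ⟨hx.2, hK.notMem_interior_of_isMinOn_inter_preimage_add hφ (by simp [hu])
      (by simpa using hx.1) hmin'⟩⟩

theorem IsCompact.exists_translate_chords_mem_frontier (hKc : IsCompact K) (hK : Convex ℝ K)
    (hu : φ u = 0) {p q : E} (hp : p ∈ K ∩ (· + u) ⁻¹' K) (hq : q ∈ K ∩ (· + u) ⁻¹' K)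
    (hpq : φ p < φ q) :
    ∃ x y, x ∈ frontier K ∧ x + u ∈ frontier K ∧ y ∈ frontier K ∧ y + u ∈ frontier K ∧
      φ x < φ y := by
  have hL : IsCompact (K ∩ (· + u) ⁻¹' K) :=
    hKc.inter_right (hKc.isClosed.preimage (continuous_add_const u))
  have hφ : φ ≠ 0 := by rintro rfl; simp at hpq
  obtain ⟨x, hx, hxmin⟩ := hL.exists_isMinOn ⟨p, hp⟩ φ.continuous.continuousOn
  obtain ⟨y, hy, hymax⟩ := hL.exists_isMaxOn ⟨p, hp⟩ φ.continuous.continuousOn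
  obtain ⟨hxf, hxuf⟩ := hK.mem_frontier_of_isMinOn_inter_preimage_add hKc.isClosed hφ hu hx hxmin
  obtain ⟨hyf, hyuf⟩ := hK.mem_frontier_of_isMinOn_inter_preimage_add (φ := -φ) hKc.isClosed
    (neg_ne_zero.2 hφ) (by simp [hu]) hy hymax.neg
  exact ⟨x, y, hxf, hxuf, hyf, hyuf,
    (isMinOn_iff.1 hxmin p hp).trans_lt (hpq.trans_le (isMaxOn_iff.1 hymax q hq))⟩

end Chords

theorem interior_convexHull_parallelogram_nonempty {E : Type*} [NormedAddCommGroup E]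
    [NormedSpace ℝ E] [FiniteDimensional ℝ E] (hE : finrank ℝ E = 2) {φ : E →ₗ[ℝ] ℝ}
    {u x y : E} (hu0 : u ≠ 0) (hu : φ u = 0) (hxy : φ x ≠ φ y) :
    (interior (convexHull ℝ {x, x + u, y + u, y})).Nonempty := by
  have hind : LinearIndependent ℝ ![u, y - x] := by
    refine LinearIndependent.pair_iff.2 fun s t hst => ?_
    have ht : t = 0 := by
      have := congrArg φ hst
      simp only [map_add, map_smul, map_sub, hu, smul_eq_mul, mul_zero, zero_add, map_zero] at this
      exact (mul_eq_zero.1 this).resolve_right (sub_ne_zero.2 hxy.symm)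
    subst ht
    simpa [hu0] using hst
  have hspan : Submodule.span ℝ (range ![u, y - x]) = ⊤ :=
    hind.span_eq_top_of_card_eq_finrank (by simp [hE])
  rw [(convex_convexHull ℝ _).interior_nonempty_iff_affineSpan_eq_top, affineSpan_convexHull,
    AffineSubspace.affineSpan_eq_top_iff_vectorSpan_eq_top_of_nonempty ℝ _ _ (by simp),
    eq_top_iff, ← hspan, Submodule.span_le]
  rintro v ⟨i, rfl⟩
  fin_cases i
  · simpa using vsub_mem_vectorSpan ℝ (by simp : x + u ∈ ({x, x + u, y + u, y} : Set E))
      (by simp : x ∈ ({x, x + u, y + u, y} : Set E))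
  · simpa using vsub_mem_vectorSpan ℝ (by simp : y ∈ ({x, x + u, y + u, y} : Set E))
      (by simp : x ∈ ({x, x + u, y + u, y} : Set E))

/-- Every 2-dimensional compact convex body in the plane contains an inscribed
nondegenerate parallelogram with vertices on its boundary. -/
theorem stmt4 (K : Set (EuclideanSpace ℝ (Fin 2)))
    (hK : IsCompact K) (hconv : Convex ℝ K) (hint : (interior K).Nonempty) :
    ∃ x y x' y' : EuclideanSpace ℝ (Fin 2),
      x ∈ frontier K ∧ y ∈ frontier K ∧ x' ∈ frontier K ∧ y' ∈ frontier K ∧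
      x + x' = y + y' ∧
      (interior (convexHull ℝ {x, y, x', y'})).Nonempty := by
  obtain ⟨p, hp⟩ := hint
  obtain ⟨ε, hε, hball⟩ := Metric.mem_nhds_iff.1 (mem_interior_iff_mem_nhds.1 hp)
  have hmem : ∀ v : EuclideanSpace ℝ (Fin 2), ‖v‖ < ε → p + v ∈ K :=
    fun v hv => hball (add_mem_ball_iff_norm.2 hv)
  set φ := EuclideanSpace.proj (𝕜 := ℝ) (1 : Fin 2)
  set u : EuclideanSpace ℝ (Fin 2) := (ε / 3) • EuclideanSpace.single 0 1
  set a : EuclideanSpace ℝ (Fin 2) := (ε / 3) • EuclideanSpace.single 1 1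
  have hu : φ u = 0 := by simp [φ, u]
  have hnorm_u : ‖u‖ = ε / 3 := by simp [u, norm_smul, abs_of_pos hε]
  have hnorm_a : ‖a‖ = ε / 3 := by simp [a, norm_smul, abs_of_pos hε]
  have hp_chord : p ∈ K ∩ (· + u) ⁻¹' K := ⟨interior_subset hp, hmem u (by linarith)⟩
  have hq_chord : p + a ∈ K ∩ (· + u) ⁻¹' K :=
    ⟨hmem a (by linarith), by
      simpa [add_assoc] using hmem (a + u) ((norm_add_le a u).trans_lt (by linarith))⟩
  obtain ⟨x, y, hx, hxu, hy, hyu, hxy⟩ :=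
    hK.exists_translate_chords_mem_frontier hconv hu hp_chord hq_chord (by simp [φ, a, hε])
  have hu0 : u ≠ 0 := norm_pos_iff.1 (by rw [hnorm_u]; positivity)
  exact ⟨x, x + u, y + u, y, hx, hxu, hyu, hy, by abel,
    interior_convexHull_parallelogram_nonempty finrank_euclideanSpace_fin (φ := φ.toLinearMap)
      hu0 hu hxy.ne⟩
end

section
/- Let K be an n-dimensional compact convex body with centroid p, and let [x, y] be a chord of K through p, so p = (1 − μ)x + μy with x, y ∈ ∂K and μ ∈ [0,1]. Then 1/(n+1) ≤ μ ≤ n/(n+1). -/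
/-! Let `d = finrank ℝ E`, let `f` be a linear functional with `f ≤ M` on `K`, `u ∈ K`, and
`g = f - f u`. The homothety of centre `u` and ratio `l ∈ (0, 1)` maps `K` into itself, multiplies
volumes by `l ^ d` and `g` by `l`, so bounding `g ≤ M - f u` on the rest of `K` gives
`(1 - l ^ (d + 1)) ∫_K g ≤ (1 - l ^ d) (M - f u) vol K`. Dividing by `1 - l` and letting `l → 1`
yields `(d + 1) ∫_K g ≤ d (M - f u) vol K`.

For a chord through the centroid, `p = (1 - t) u + t v`, take `f` supporting `K` at `v`, so
`M = f v`; then `∫_K g = vol K · t (f v - f u)` and `f v > f u` because `p` lies in the interior,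
whence `t ≤ d / (d + 1)`. Exchanging the endpoints gives `1 - t ≤ d / (d + 1)`. -/

open MeasureTheory Set Module AffineMap

theorem IsCompact.measureReal_pos_of_nonempty_interior {X : Type*} [TopologicalSpace X]
    [MeasurableSpace X] {μ : Measure X} [μ.IsOpenPosMeasure] [IsFiniteMeasureOnCompacts μ]
    {K : Set X} (hK : IsCompact K) (hint : (interior K).Nonempty) : 0 < μ.real K :=
  ENNReal.toReal_pos (μ.measure_pos_of_nonempty_interior hint).ne' hK.measure_lt_top.ne

section

variable {E : Type*} [NormedAddCommGroup E] [NormedSpace ℝ E]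

theorem Convex.exists_forall_le_of_notMem_interior {K : Set E} (hconv : Convex ℝ K)
    (hint : (interior K).Nonempty) {v : E} (hv : v ∉ interior K) :
    ∃ f : StrongDual ℝ E, (∀ z ∈ interior K, f z < f v) ∧ ∀ z ∈ K, f z ≤ f v := by
  obtain ⟨f, hf⟩ := geometric_hahn_banach_open_point hconv.interior isOpen_interior hv
  have hK : K ⊆ closure (interior K) := by
    rw [hconv.closure_interior_eq_closure_of_nonempty_interior hint]
    exact subset_closure
  exact ⟨f, hf, fun z hz => closure_minimal (fun a ha => (hf a ha).le)
    (isClosed_le f.continuous continuous_const) (hK hz)⟩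

theorem Convex.image_homothety_subset {K : Set E} (hconv : Convex ℝ K) {x : E} (hx : x ∈ K)
    {t : ℝ} (ht : t ∈ Icc (0 : ℝ) 1) : homothety x t '' K ⊆ K := by
  rintro _ ⟨z, hz, rfl⟩
  rw [homothety_eq_lineMap]
  exact hconv.lineMap_mem hx hz ht

variable [FiniteDimensional ℝ E] [MeasurableSpace E] [BorelSpace E]
  (μ : Measure E) [μ.IsAddHaarMeasure]

theorem setIntegral_image_homothety {F : Type*} [NormedAddCommGroup F] [NormedSpace ℝ F]
    (x : E) {r : ℝ} (hr : r ≠ 0) {s : Set E} (hs : MeasurableSet s) (g : E → F) :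
    ∫ z in homothety x r '' s, g z ∂μ = |r| ^ finrank ℝ E • ∫ z in s, g (homothety x r z) ∂μ := by
  have hderiv : ∀ z, HasFDerivAt (homothety x r) (r • ContinuousLinearMap.id ℝ E) z := by
    intro z
    have h : (homothety x r : E → E) = fun z => r • (z - x) + x :=
      funext fun z => homothety_apply x r z
    rw [h]
    exact ((hasFDerivAt_id z).sub_const x).const_smul r |>.add_const x
  rw [integral_image_eq_integral_abs_det_fderiv_smul μ hs (fun z _ => (hderiv z).hasFDerivWithinAt)
    (homothety_injective x hr).injOn, integral_smul]
  simp [ContinuousLinearMap.det]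

theorem Convex.one_sub_pow_mul_setIntegral_le {K : Set E} (hK : IsCompact K) (hconv : Convex ℝ K)
    {x₀ : E} (hx₀ : x₀ ∈ K) (f : StrongDual ℝ E) {M : ℝ} (hM : ∀ z ∈ K, f z ≤ M)
    {l : ℝ} (hl : l ∈ Ioo (0 : ℝ) 1) :
    (1 - l ^ (finrank ℝ E + 1)) * ∫ z in K, (f z - f x₀) ∂μ ≤
      (1 - l ^ finrank ℝ E) * ((M - f x₀) * μ.real K) := by
  set K' := homothety x₀ l '' K
  have hK'K : K' ⊆ K := hconv.image_homothety_subset hx₀ (Ioo_subset_Icc_self hl)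
  have hK' : MeasurableSet K' := (hK.image (homothety_continuous x₀ l)).measurableSet
  have hg : IntegrableOn (fun z => f z - f x₀) K μ :=
    (f.continuous.sub continuous_const).continuousOn.integrableOn_compact hK
  have hgK' : ∫ z in K', (f z - f x₀) ∂μ = l ^ (finrank ℝ E + 1) * ∫ z in K, (f z - f x₀) ∂μ := by
    have hhom : ∀ z, f (homothety x₀ l z) - f x₀ = l * (f z - f x₀) := fun z => by
      rw [homothety_apply, vsub_eq_sub, vadd_eq_add, map_add, map_smul, map_sub, smul_eq_mul]
      ring
    rw [setIntegral_image_homothety μ x₀ hl.1.ne' hK.measurableSet, abs_of_pos hl.1]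
    simp_rw [hhom, integral_const_mul, smul_eq_mul, pow_succ, mul_assoc]
  have hvolK' : μ.real K' = l ^ finrank ℝ E * μ.real K := by
    rw [measureReal_def, Measure.addHaar_image_homothety, ENNReal.toReal_mul,
      ENNReal.toReal_ofReal (abs_nonneg _), abs_of_pos (pow_pos hl.1 _), measureReal_def]
  have hbound : ∫ z in K \ K', (f z - f x₀) ∂μ ≤ (M - f x₀) * μ.real (K \ K') := by
    calc ∫ z in K \ K', (f z - f x₀) ∂μ ≤ ∫ _ in K \ K', (M - f x₀) ∂μ :=
          setIntegral_mono_on (hg.mono_set sdiff_subset)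
            (integrableOn_const (measure_mono sdiff_subset |>.trans_lt hK.measure_lt_top).ne)
            (hK.measurableSet.diff hK') fun z hz => by linarith [hM z hz.1]
      _ = (M - f x₀) * μ.real (K \ K') := by rw [setIntegral_const, smul_eq_mul, mul_comm]
  rw [setIntegral_sdiff hK' hg hK'K, hgK', measureReal_sdiff hK'K hK' hK.measure_lt_top.ne,
    hvolK'] at hbound
  linarith

theorem Convex.finrank_add_one_mul_setIntegral_le {K : Set E} (hK : IsCompact K)
    (hconv : Convex ℝ K) {x₀ : E} (hx₀ : x₀ ∈ K) (f : StrongDual ℝ E) {M : ℝ}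
    (hM : ∀ z ∈ K, f z ≤ M) :
    (finrank ℝ E + 1) * ∫ z in K, (f z - f x₀) ∂μ ≤ finrank ℝ E * ((M - f x₀) * μ.real K) := by
  set d := finrank ℝ E
  have hgeom : ∀ l ∈ Ioo (0 : ℝ) 1, (∑ i ∈ Finset.range (d + 1), l ^ i) * ∫ z in K, (f z - f x₀) ∂μ
      ≤ (∑ i ∈ Finset.range d, l ^ i) * ((M - f x₀) * μ.real K) := by
    intro l hl
    refine le_of_mul_le_mul_left ?_ (sub_pos.2 hl.2)
    rw [← mul_assoc, ← mul_assoc, mul_neg_geom_sum, mul_neg_geom_sum]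
    exact hconv.one_sub_pow_mul_setIntegral_le μ hK hx₀ f hM hl
  have h1 : (1 : ℝ) ∈ closure (Ioo 0 1) := by
    rw [closure_Ioo zero_ne_one]
    exact right_mem_Icc.2 zero_le_one
  simpa using le_on_closure hgeom (Continuous.continuousOn (by fun_prop))
    (Continuous.continuousOn (by fun_prop)) h1

noncomputable def centroid (K : Set E) : E := (μ.real K)⁻¹ • ∫ x in K, x ∂μ

variable {μ}

theorem setIntegral_eq_measureReal_mul_apply_centroid {K : Set E} (hK : IsCompact K)
    (hV : μ.real K ≠ 0) (f : StrongDual ℝ E) :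
    ∫ z in K, f z ∂μ = μ.real K * f (centroid μ K) := by
  have hI : IntegrableOn (fun x : E => x) K μ := continuousOn_id.integrableOn_compact hK
  rw [centroid, map_smul, smul_eq_mul, mul_inv_cancel_left₀ hV, ← f.integral_comp_comm hI]

theorem Convex.centroid_mem_interior {K : Set E} (hK : IsCompact K) (hconv : Convex ℝ K)
    (hint : (interior K).Nonempty) : centroid μ K ∈ interior K := by
  set p := centroid μ K
  by_contra hp
  obtain ⟨f, hf_int, hf⟩ := hconv.exists_forall_le_of_notMem_interior hint hp
  have hV := hK.measureReal_pos_of_nonempty_interior (μ := μ) hint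
  have hg : IntegrableOn (fun z => f p - f z) K μ :=
    (continuous_const.sub f.continuous).continuousOn.integrableOn_compact hK
  have hzero : ∫ z in K, (f p - f z) ∂μ = 0 := by
    rw [integral_sub (integrableOn_const (C := f p) hK.measure_lt_top.ne)
      (f.continuous.continuousOn.integrableOn_compact hK),
      setIntegral_eq_measureReal_mul_apply_centroid hK hV.ne', setIntegral_const, smul_eq_mul]
    ring
  have hpos : 0 < ∫ z in K, (f p - f z) ∂μ := by
    rw [setIntegral_pos_iff_support_of_nonneg_ae ?_ hg]
    · refine (isOpen_interior.measure_pos μ hint).trans_le (measure_mono fun a ha => ?_)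
      exact ⟨sub_ne_zero.2 (hf_int a ha).ne', interior_subset ha⟩
    · filter_upwards [ae_restrict_mem hK.measurableSet] with z hz using sub_nonneg.2 (hf z hz)
  exact hpos.ne' hzero

theorem Convex.mul_finrank_add_one_le_of_centroid_eq {K : Set E} (hK : IsCompact K)
    (hconv : Convex ℝ K) (hint : (interior K).Nonempty) {u v : E} (hu : u ∈ K)
    (hv : v ∉ interior K) {t : ℝ} (ht : centroid μ K = (1 - t) • u + t • v) :
    t * (finrank ℝ E + 1) ≤ finrank ℝ E := by
  obtain ⟨f, hf_int, hf⟩ := hconv.exists_forall_le_of_notMem_interior hint hv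
  have hV := hK.measureReal_pos_of_nonempty_interior (μ := μ) hint
  have hfp : f (centroid μ K) - f u = t * (f v - f u) := by
    rw [ht, map_add, map_smul, map_smul, smul_eq_mul, smul_eq_mul]
    ring
  have hfuv : 0 < f v - f u := by
    have hp := hf_int _ (hconv.centroid_mem_interior (μ := μ) hK hint)
    refine (sub_nonneg.2 (hf u hu)).lt_of_ne fun h => ?_
    rw [← h, mul_zero] at hfp
    linarith
  have hmean : ∫ z in K, (f z - f u) ∂μ = μ.real K * (t * (f v - f u)) := by
    rw [integral_sub (f.continuous.continuousOn.integrableOn_compact hK)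
      (integrableOn_const (C := f u) hK.measure_lt_top.ne),
      setIntegral_eq_measureReal_mul_apply_centroid hK hV.ne', setIntegral_const, smul_eq_mul,
      ← hfp]
    ring
  have hcore := hconv.finrank_add_one_mul_setIntegral_le μ hK hu f hf
  rw [hmean] at hcore
  refine le_of_mul_le_mul_right ?_ (mul_pos hfuv hV)
  linarith

end

theorem stmt5_general {n : ℕ} (K : Set (EuclideanSpace ℝ (Fin n)))
    (hK : IsCompact K) (hconv : Convex ℝ K) (hint : (interior K).Nonempty)
    (p : EuclideanSpace ℝ (Fin n))
    (hp : p = (volume K).toReal⁻¹ • ∫ x in K, x)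
    (x y : EuclideanSpace ℝ (Fin n)) (hx : x ∈ frontier K) (hy : y ∈ frontier K)
    (μ : ℝ)
    (hchord : p = (1 - μ) • x + μ • y) :
    1 / (n + 1 : ℝ) ≤ μ ∧ μ ≤ n / (n + 1 : ℝ) := by
  have hcentroid : centroid volume K = p := hp.symm
  have hn : (0 : ℝ) < n + 1 := by positivity
  have hxK : x ∈ K := hK.isClosed.frontier_subset hx
  have hyK : y ∈ K := hK.isClosed.frontier_subset hy
  have hupper := hconv.mul_finrank_add_one_le_of_centroid_eq (μ := volume) hK hint hxK hy.2
    (hcentroid.trans hchord)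
  have hlower := hconv.mul_finrank_add_one_le_of_centroid_eq (μ := volume) hK hint hyK hx.2
    (t := 1 - μ) (by rw [hcentroid, hchord, sub_sub_cancel, add_comm])
  rw [finrank_euclideanSpace_fin] at hupper hlower
  constructor
  · rw [div_le_iff₀ hn]
    linarith
  · rw [le_div_iff₀ hn]
    linarith

/-- Hammer's theorem: the centroid of an `n`-dimensional convex body divides every chord
through it in ratio between `1/(n+1)` and `n/(n+1)`. -/
theorem stmt5 {n : ℕ} (K : Set (EuclideanSpace ℝ (Fin n)))
    (hK : IsCompact K) (hconv : Convex ℝ K) (hint : (interior K).Nonempty)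
    (p : EuclideanSpace ℝ (Fin n))
    (hp : p = (volume K).toReal⁻¹ • ∫ x in K, x)
    (x y : EuclideanSpace ℝ (Fin n)) (hx : x ∈ frontier K) (hy : y ∈ frontier K)
    (μ : ℝ) (hμ : μ ∈ Set.Icc (0 : ℝ) 1)
    (hchord : p = (1 - μ) • x + μ • y) :
    1 / (n + 1 : ℝ) ≤ μ ∧ μ ≤ n / (n + 1 : ℝ) :=
  stmt5_general K hK hconv hint p hp x y hx hy μ hchord
end

section
/- Let C be a full-dimensional closed pointed convex cone in ℝⁿ, S a bounded section of C with affine span H, and a an interior point of C with λa ∈ S for some λ > 0. Let x ∈ ∂S and let r(x) be the second endpoint of the chord of S through the point λa ∈ S starting at x, with λa = λμ_x x + (1 − λμ_x) r(x) for μ_x ∈ (0, 1/λ). Then μ_x x ∈ ∂C ∩ ∂(a − C). -/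
open Set

lemma aux_intrinsic_frontier {n : ℕ} {C : Set (EuclideanSpace ℝ (Fin n))}
    (hclosed : IsClosed C)
    (f : EuclideanSpace ℝ (Fin n) →ₗ[ℝ] ℝ) (c : ℝ)
    {S : Set (EuclideanSpace ℝ (Fin n))} (hS : S = C ∩ {x | f x = c})
    {y : EuclideanSpace ℝ (Fin n)} (hy : y ∈ intrinsicFrontier ℝ S) :
    y ∈ frontier C := by
  have hScl : IsClosed S := by
    rw [hS]
    exact hclosed.inter (isClosed_eq f.continuous_of_finiteDimensional continuous_const)
  have hyS : y ∈ S := intrinsicFrontier_subset hScl hy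
  rw [hclosed.frontier_eq]
  refine ⟨(hS ▸ hyS).1, fun hyint => ?_⟩
  have hspan : ∀ z ∈ affineSpan ℝ S, f z = c := by
    have hle : affineSpan ℝ S ≤
        AffineSubspace.comap f.toAffineMap (AffineSubspace.mk' c (⊥ : Submodule ℝ ℝ)) := by
      refine affineSpan_le.2 fun z hz => ?_
      have hfz : f z = c := (hS ▸ hz).2
      simp only [SetLike.mem_coe, AffineSubspace.mem_comap,
        AffineSubspace.mem_mk']
      simp [hfz]
    intro z hz
    have h2 := hle hz
    simp only [SetLike.mem_coe, AffineSubspace.mem_comap,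
      AffineSubspace.mem_mk', Submodule.mem_bot] at h2
    simpa [sub_eq_zero] using h2
  have hyA : y ∈ affineSpan ℝ S := subset_affineSpan ℝ S hyS
  have hmem : y ∈ intrinsicInterior ℝ S := by
    refine ⟨⟨y, hyA⟩, ?_, rfl⟩
    have hU : ((↑) ⁻¹' (interior C) : Set (affineSpan ℝ S)) ⊆ interior ((↑) ⁻¹' S) := by
      apply interior_maximal
      · intro z hz
        simp only [Set.mem_preimage] at hz ⊢
        have : (z : EuclideanSpace ℝ (Fin n)) ∈ C ∩ {x | f x = c} :=
          ⟨interior_subset hz, hspan z z.2⟩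
        rwa [← hS] at this
      · exact continuous_subtype_val.isOpen_preimage _ isOpen_interior
    exact hU hyint
  have hdisj := closure_diff_intrinsicFrontier (𝕜 := ℝ) S
  rw [← hdisj] at hmem
  exact hmem.2 hy

lemma aux_smul_frontier {n : ℕ} {C : Set (EuclideanSpace ℝ (Fin n))}
    (hclosed : IsClosed C)
    (hcone : ∀ t : ℝ, 0 ≤ t → ∀ x ∈ C, t • x ∈ C)
    {t : ℝ} (ht : 0 < t) {y : EuclideanSpace ℝ (Fin n)} (hy : y ∈ frontier C) :
    t • y ∈ frontier C := by
  rw [hclosed.frontier_eq] at hy ⊢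
  refine ⟨hcone t ht.le y hy.1, fun hint => ?_⟩
  have hsub : (t⁻¹ • ·) '' interior C ⊆ interior C := by
    apply interior_maximal
    · rintro _ ⟨z, hz, rfl⟩
      exact hcone t⁻¹ (inv_nonneg.2 ht.le) z (interior_subset hz)
    · exact isOpenMap_smul₀ (inv_ne_zero ht.ne') _ isOpen_interior
  have : y ∈ interior C := by
    exact hsub ⟨t • y, hint, by simp [smul_smul, inv_mul_cancel₀ ht.ne']⟩
  exact hy.2 this

/-- If `x` is a relative boundary point of a bounded section `S` of a full-dimensional
closed pointed convex cone `C`, `λa ∈ relint S` for an interior point `a` of `C`, and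
`r` is the opposite endpoint of the chord of `S` through `λa` starting at `x`, with
`λa = (λμ) x + (1 - λμ) r` and `μ ∈ (0, 1/λ)`, then `μ x ∈ ∂C ∩ ∂(a - C)`. -/
theorem stmt19 {n : ℕ} (C : Set (EuclideanSpace ℝ (Fin n)))
    (hclosed : IsClosed C) (hconv : Convex ℝ C)
    (hcone : ∀ t : ℝ, 0 ≤ t → ∀ x ∈ C, t • x ∈ C)
    (hpointed : C ∩ (-C) = {0}) (hfull : (interior C).Nonempty)
    (f : EuclideanSpace ℝ (Fin n) →ₗ[ℝ] ℝ) (c : ℝ) (hf : f ≠ 0)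
    (S : Set (EuclideanSpace ℝ (Fin n))) (hS : S = C ∩ {x | f x = c})
    (hSb : Bornology.IsBounded S)
    (a : EuclideanSpace ℝ (Fin n)) (ha : a ∈ interior C)
    (lam : ℝ) (hlam : 0 < lam) (hla : lam • a ∈ intrinsicInterior ℝ S)
    (x : EuclideanSpace ℝ (Fin n)) (hx : x ∈ intrinsicFrontier ℝ S)
    (r : EuclideanSpace ℝ (Fin n)) (hr : r ∈ intrinsicFrontier ℝ S)
    (μ : ℝ) (hμ : μ ∈ Set.Ioo (0 : ℝ) (1 / lam))
    (hchord : lam • a = (lam * μ) • x + (1 - lam * μ) • r) :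
    μ • x ∈ frontier C ∩ frontier ((fun c' => a - c') '' C) := by
  obtain ⟨hμ0, hμ1⟩ := hμ
  have hxF : x ∈ frontier C := aux_intrinsic_frontier hclosed f c hS hx
  have hrF : r ∈ frontier C := aux_intrinsic_frontier hclosed f c hS hr
  have hlm : lam * μ < 1 := by
    have := (lt_div_iff₀ hlam).1 hμ1
    linarith [this]
  have ht : 0 < (1 - lam * μ) / lam := div_pos (by linarith) hlam
  have key : a - μ • x = ((1 - lam * μ) / lam) • r := by
    have h1 : lam • (a - μ • x) = lam • (((1 - lam * μ) / lam) • r) := by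
      rw [smul_sub, hchord, smul_smul, smul_smul, mul_div_cancel₀ _ hlam.ne']
      abel
    exact smul_right_injective _ hlam.ne' h1
  constructor
  · exact aux_smul_frontier hclosed hcone hμ0 hxF
  · have himg : (fun c' => a - c') '' C =
        ((Homeomorph.neg (EuclideanSpace ℝ (Fin n))).trans (Homeomorph.addLeft a)) '' C := by
      apply Set.image_congr
      intro z _
      simp [sub_eq_add_neg]
    rw [himg, ← Homeomorph.image_frontier]
    refine ⟨a - μ • x, key ▸ aux_smul_frontier hclosed hcone ht hrF, ?_⟩
    show a + -(a - μ • x) = μ • x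
    abel
end
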